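/- For any two CDFs F and G on ℝ with finite first moments, ∫_ℝ |F(t) - G(t)| dt = ∫₀¹ |F^{-1}(u) - G^{-1}(u)| du, i.e., the area between the CDFs equals the area between the quantile functions. -/

import Mathlib

/-!
Both integrals compute the area of the region between the graphs of `F` and `G` inside
`ℝ × (0, 1)`. Its vertical section at `t` is the interval between `F t` and `G t`; because
`u ≤ F t ↔ F⁻¹ u ≤ t` for `u ∈ (0, 1)`, its horizontal section at height `u` is the interval
between `F⁻¹ u` and `G⁻¹ u`. Tonelli's theorem gives the identity in `ℝ≥0∞`, and the Bochner
integrals are its real parts.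
-/

open MeasureTheory

noncomputable def quantile (μ : Measure ℝ) (u : ℝ) : ℝ :=
  sInf {x : ℝ | u ≤ ProbabilityTheory.cdf μ x}

open ProbabilityTheory Set
open scoped symmDiff

lemma StieltjesFunction.le_apply_sInf (f : StieltjesFunction ℝ) {u : ℝ}
    (hne : {x | u ≤ f x}.Nonempty) (hbdd : BddBelow {x | u ≤ f x}) :
    u ≤ f (sInf {x | u ≤ f x}) := by
  have h_above : ∀ x ∈ Ioi (sInf {x | u ≤ f x}), u ≤ f x := fun x hx ↦ by
    obtain ⟨s, hs, hsx⟩ := (csInf_lt_iff hbdd hne).mp hx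
    exact hs.trans (f.mono hsx.le)
  exact ge_of_tendsto ((f.right_continuous _).mono Ioi_subset_Ici_self)
    (eventually_nhdsWithin_of_forall h_above)

lemma le_cdf_iff_quantile_le (μ : Measure ℝ) [IsProbabilityMeasure μ] {u : ℝ}
    (hu : u ∈ Ioo 0 1) (t : ℝ) : u ≤ cdf μ t ↔ quantile μ u ≤ t := by
  have hne : {x | u ≤ cdf μ x}.Nonempty :=
    ((tendsto_cdf_atTop μ).eventually_const_lt hu.2).exists.imp fun _ ↦ le_of_lt
  have hbdd : BddBelow {x | u ≤ cdf μ x} := by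
    obtain ⟨x₀, hx₀⟩ := ((tendsto_cdf_atBot μ).eventually_lt_const hu.1).exists
    exact ⟨x₀, fun s hs ↦ le_of_not_gt fun hs₀ ↦ (hs.trans ((cdf μ).mono hs₀.le)).not_gt hx₀⟩
  exact ⟨fun h ↦ csInf_le hbdd h, fun h ↦ ((cdf μ).le_apply_sInf hne hbdd).trans ((cdf μ).mono h)⟩

lemma quantile_monotoneOn (μ : Measure ℝ) [IsProbabilityMeasure μ] :
    MonotoneOn (quantile μ) (Ioo 0 1) := fun _ hu _ hv huv ↦
  (le_cdf_iff_quantile_le μ hu _).mp (huv.trans ((le_cdf_iff_quantile_le μ hv _).mpr le_rfl))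

section Intervals

variable {α : Type*} [LinearOrder α]

lemma Set.Iic_symmDiff_Iic (a b : α) : Iic a ∆ Iic b = Ioc (min a b) (max a b) := by
  rcases le_total a b with h | h
  · rw [symmDiff_of_le (Iic_subset_Iic.mpr h), Iic_sdiff_Iic, min_eq_left h, max_eq_right h]
  · rw [symmDiff_of_ge (Iic_subset_Iic.mpr h), Iic_sdiff_Iic, min_eq_right h, max_eq_left h]

lemma Set.Ici_symmDiff_Ici (a b : α) : Ici a ∆ Ici b = Ico (min a b) (max a b) := by
  rcases le_total a b with h | h
  · rw [symmDiff_of_ge (Ici_subset_Ici.mpr h), Ici_sdiff_Ici, min_eq_left h, max_eq_right h]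
  · rw [symmDiff_of_le (Ici_subset_Ici.mpr h), Ici_sdiff_Ici, min_eq_right h, max_eq_left h]

end Intervals

lemma Real.volume_Ici_symmDiff_Ici (a b : ℝ) :
    volume (Ici a ∆ Ici b) = ENNReal.ofReal |a - b| := by
  rw [Ici_symmDiff_Ici, Real.volume_Ico, max_sub_min_eq_abs']

lemma Real.volume_restrict_Ioo_Iic_symmDiff_Iic {a b : ℝ} (ha : a ∈ Icc 0 1) (hb : b ∈ Icc 0 1) :
    volume.restrict (Ioo 0 1) (Iic a ∆ Iic b) = ENNReal.ofReal |a - b| := by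
  have h_sub : Ioc (min a b) (max a b) ⊆ Ioc 0 1 :=
    Ioc_subset_Ioc (le_min ha.1 hb.1) (max_le ha.2 hb.2)
  rw [Measure.restrict_congr_set Ioo_ae_eq_Ioc, Iic_symmDiff_Iic,
    Measure.restrict_apply measurableSet_Ioc, inter_eq_left.mpr h_sub, Real.volume_Ioc,
    max_sub_min_eq_abs']

theorem lintegral_abs_sub_eq_setLIntegral_abs_sub_of_le_iff {f g p q : ℝ → ℝ}
    (hf : Measurable f) (hg : Measurable g)
    (hf_mem : ∀ t, f t ∈ Icc 0 1) (hg_mem : ∀ t, g t ∈ Icc 0 1)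
    (hfp : ∀ u ∈ Ioo 0 1, ∀ t, u ≤ f t ↔ p u ≤ t)
    (hgq : ∀ u ∈ Ioo 0 1, ∀ t, u ≤ g t ↔ q u ≤ t) :
    ∫⁻ t, ENNReal.ofReal |f t - g t| = ∫⁻ u in Ioo 0 1, ENNReal.ofReal |p u - q u| := by
  set R : Set (ℝ × ℝ) := {x | x.2 ≤ f x.1} ∆ {x | x.2 ≤ g x.1}
  have hR : MeasurableSet R :=
    (measurableSet_le measurable_snd (hf.comp measurable_fst)).symmDiff
      (measurableSet_le measurable_snd (hg.comp measurable_fst))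
  calc ∫⁻ t, ENNReal.ofReal |f t - g t|
      = volume.prod (volume.restrict (Ioo 0 1)) R := by
        rw [Measure.prod_apply hR]
        refine lintegral_congr fun t ↦ ?_
        rw [preimage_symmDiff]
        exact (Real.volume_restrict_Ioo_Iic_symmDiff_Iic (hf_mem t) (hg_mem t)).symm
    _ = ∫⁻ u in Ioo 0 1, ENNReal.ofReal |p u - q u| := by
        rw [Measure.prod_apply_symm hR]
        refine setLIntegral_congr_fun measurableSet_Ioo fun u hu ↦ ?_
        have h_section : (fun t ↦ (t, u)) ⁻¹' R = Ici (p u) ∆ Ici (q u) := by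
          rw [preimage_symmDiff]
          congr 1 <;> ext t
          exacts [hfp u hu t, hgq u hu t]
        rw [h_section, Real.volume_Ici_symmDiff_Ici]

theorem area_between_cdfs_eq_area_between_quantiles_general
    (μ ν : Measure ℝ) [IsProbabilityMeasure μ] [IsProbabilityMeasure ν] :
    ∫ t : ℝ, |ProbabilityTheory.cdf μ t - ProbabilityTheory.cdf ν t|
      = ∫ u in Set.Ioo (0:ℝ) 1, |quantile μ u - quantile ν u| := by
  have hμ := (cdf μ).mono.measurable
  have hν := (cdf ν).mono.measurable
  have hqμ := aemeasurable_restrict_of_monotoneOn (μ := volume) measurableSet_Ioo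
    (quantile_monotoneOn μ)
  have hqν := aemeasurable_restrict_of_monotoneOn (μ := volume) measurableSet_Ioo
    (quantile_monotoneOn ν)
  have h_cdfs : AEStronglyMeasurable (fun t ↦ |cdf μ t - cdf ν t|) := by fun_prop
  have h_quantiles : AEStronglyMeasurable (fun u ↦ |quantile μ u - quantile ν u|)
      (volume.restrict (Ioo 0 1)) := by fun_prop
  rw [integral_eq_lintegral_of_nonneg_ae (ae_of_all _ fun _ ↦ abs_nonneg _) h_cdfs,
    integral_eq_lintegral_of_nonneg_ae (ae_of_all _ fun _ ↦ abs_nonneg _) h_quantiles,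
    lintegral_abs_sub_eq_setLIntegral_abs_sub_of_le_iff hμ hν
      (fun t ↦ ⟨cdf_nonneg μ t, cdf_le_one μ t⟩) (fun t ↦ ⟨cdf_nonneg ν t, cdf_le_one ν t⟩)
      (fun _ hu ↦ le_cdf_iff_quantile_le μ hu) (fun _ hu ↦ le_cdf_iff_quantile_le ν hu)]

theorem area_between_cdfs_eq_area_between_quantiles
    (μ ν : Measure ℝ) [IsProbabilityMeasure μ] [IsProbabilityMeasure ν]
    (hμ : Integrable id μ) (hν : Integrable id ν) :
    ∫ t : ℝ, |ProbabilityTheory.cdf μ t - ProbabilityTheory.cdf ν t|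
      = ∫ u in Set.Ioo (0:ℝ) 1, |quantile μ u - quantile ν u| :=
  area_between_cdfs_eq_area_between_quantiles_general μ ν
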